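/- arXiv:1107.5281 — 3 statements merged into one kernel-verified Lean document; each statement's English description precedes it below -/
import Mathlib

section
/- Let K be an imaginary quadratic field, n ≥ 1 an integer, and x ∈ Kˣ. If the principal fractional ideal x·𝓞_K is the (n+1)-st power of some fractional ideal of K, then N_{K/ℚ}(x) is an (n+1)-st power in ℚˣ. -/
/-!
Absence of real embeddings makes `K` totally complex, so the complex embeddings come in
conjugate pairs and `N(x) = |∏_w σ_w(x)|² > 0`, one `σ_w` per infinite place `w`. On the
other hand `|N(x)|` is the absolute norm of `x𝓞_K = I ^ (n+1)`, which is `N(I) ^ (n+1)`.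
-/

open NumberField
open scoped nonZeroDivisors

namespace NumberField

theorem IsTotallyComplex.of_isEmpty_ringHom_real {K : Type*} [Field K] [IsEmpty (K →+* ℝ)] :
    IsTotallyComplex K :=
  ⟨fun _ => InfinitePlace.not_isReal_iff_isComplex.mp fun hw =>
    IsEmpty.false (ComplexEmbedding.IsReal.embedding (InfinitePlace.isReal_iff.mp hw))⟩

namespace InfinitePlace

open ComplexEmbedding

variable {K : Type*} [Field K]

theorem bijective_sumElim_embedding_conjugate [IsTotallyComplex K] :
    Function.Bijective
      (Sum.elim (embedding (K := K)) fun w : InfinitePlace K => conjugate w.embedding) := by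
  have conjugate_ne (w : InfinitePlace K) : conjugate w.embedding ≠ w.embedding := fun h =>
    IsTotallyComplex.complexEmbedding_not_isReal _ (ComplexEmbedding.isReal_iff.mpr h)
  refine ⟨?_, fun φ => ?_⟩
  · rintro (v | v) (w | w) h
    · exact congrArg Sum.inl (embedding_injective K h)
    · exact absurd (eq_of_embedding_eq_conjugate K h ▸ h).symm (conjugate_ne w)
    · exact absurd (eq_of_embedding_eq_conjugate K h.symm ▸ h) (conjugate_ne w)
    · exact congrArg Sum.inr (conjugate_embedding_injective K h)
  · rcases embedding_mk_eq φ with h | h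
    · exact ⟨Sum.inl (mk φ), h⟩
    · exact ⟨Sum.inr (mk φ), by simp [h]⟩

theorem norm_eq_normSq_prod_embedding [NumberField K] [IsTotallyComplex K] (x : K) :
    (Algebra.norm ℚ x : ℝ) = Complex.normSq (∏ w : InfinitePlace K, w.embedding x) := by
  have h := Algebra.norm_eq_prod_embeddings ℚ ℂ x
  rw [← Fintype.prod_equiv (RingHom.equivRatAlgHom K ℂ) (fun φ => φ x) _ fun _ => rfl,
    ← Fintype.prod_bijective _ bijective_sumElim_embedding_conjugate _ (fun φ => φ x)
      fun _ => rfl,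
    Fintype.prod_sum_type] at h
  simp only [Sum.elim_inl, Sum.elim_inr, conjugate_coe_eq, ← map_prod, Complex.mul_conj] at h
  rw [eq_ratCast, ← Complex.ofReal_ratCast] at h
  exact_mod_cast h

theorem norm_pos_of_isTotallyComplex [NumberField K] [IsTotallyComplex K] {x : K} (hx : x ≠ 0) :
    0 < Algebra.norm ℚ x := by
  have : (0 : ℝ) < Algebra.norm ℚ x := by
    rw [norm_eq_normSq_prod_embedding]
    exact Complex.normSq_pos.mpr (Finset.prod_ne_zero_iff.mpr fun w _ => (map_ne_zero _).mpr hx)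
  exact_mod_cast this

end InfinitePlace

end NumberField

theorem stmt2_general (K : Type*) [Field K] [NumberField K]
    (hre : IsEmpty (K →+* ℝ))
    (n : ℕ)
    (x : Kˣ)
    (hx : ∃ I : FractionalIdeal (𝓞 K)⁰ K,
        FractionalIdeal.spanSingleton (𝓞 K)⁰ (x : K) = I ^ (n + 1)) :
    ∃ q : ℚˣ, Algebra.norm ℚ (x : K) = (q : ℚ) ^ (n + 1) := by
  obtain ⟨I, hI⟩ := hx
  have : IsTotallyComplex K := IsTotallyComplex.of_isEmpty_ringHom_real
  have hpos := InfinitePlace.norm_pos_of_isTotallyComplex x.ne_zero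
  have hnorm : Algebra.norm ℚ (x : K) = FractionalIdeal.absNorm I ^ (n + 1) := by
    rw [← abs_of_pos hpos, ← FractionalIdeal.absNorm_span_singleton (𝓞 K), hI, map_pow]
  exact ⟨Units.mk0 _ (ne_zero_pow n.succ_ne_zero (hnorm ▸ hpos.ne')), hnorm⟩

/-- If `K` is imaginary quadratic and the principal fractional ideal `x𝓞_K` is an
`(n+1)`-st power of a fractional ideal, then `N_{K/ℚ}(x)` is an `(n+1)`-st power in `ℚˣ`. -/
theorem stmt2 (K : Type*) [Field K] [NumberField K]
    (h2 : Module.finrank ℚ K = 2) (hre : IsEmpty (K →+* ℝ))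
    (n : ℕ) (hn : 1 ≤ n)
    (x : Kˣ)
    (hx : ∃ I : FractionalIdeal (𝓞 K)⁰ K,
        FractionalIdeal.spanSingleton (𝓞 K)⁰ (x : K) = I ^ (n + 1)) :
    ∃ q : ℚˣ, Algebra.norm ℚ (x : K) = (q : ℚ) ^ (n + 1) :=
  stmt2_general K hre n x hx
end

section
/- Let K be an imaginary quadratic field and n ≥ 1 an integer. Let 𝐋_{n+1} be the subgroup of Kˣ consisting of those x such that N_{K/ℚ}(x) is an (n+1)-st power in ℚˣ and the principal fractional ideal x·𝓞_K is the (n+1)-st power of a fractional ideal of K. Then (Kˣ)^{n+1} ⊆ 𝐋_{n+1} and the cardinality of the quotient group 𝐋_{n+1}/(Kˣ)^{n+1} equals h_{K,n+1} · |μ_{n+1}(K)|. -/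
/-!
Sending `x ∈ Kˣ` with `x 𝓞_K = I ^ m` to the class of `I` (unique, since ideals have unique `m`-th
roots in a Dedekind domain) is a homomorphism from the group of such `x` onto the `m`-torsion of the
class group. Its kernel is generated by `(Kˣ) ^ m` and the units of `𝓞_K`, and a unit of `𝓞_K`
that is an `m`-th power in `K` is already one in `𝓞_K` (integral closedness). So the quotient of
this group by `(Kˣ) ^ m` has `h_{K,m} · |𝓞_Kˣ / (𝓞_Kˣ) ^ m|` elements, and for the finite group
`𝓞_Kˣ` the last factor is the number of `m`-th roots of unity. In an imaginary quadratic field the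
norm is positive (`N x = |φ x| ^ 2`), so `N x = N(I) ^ m` and the group is `𝐋_m`.
-/

open NumberField FractionalIdeal
open scoped nonZeroDivisors

theorem card_quotient_eq_card_range_mul_card_quotient_comap {A G C : Type*} [Group A] [Group G]
    [Group C] (ι : A →* G) (φ : G →* C) (N : Subgroup G) [N.Normal]
    (hker : φ.ker = N ⊔ ι.range) :
    Nat.card (G ⧸ N) = Nat.card φ.range * Nat.card (A ⧸ N.comap ι) := by
  have hN : N ≤ φ.ker := hker ▸ le_sup_left
  set ψ := QuotientGroup.lift N φ hN
  have hrange : ψ.range = φ.range := by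
    rw [← QuotientGroup.lift_comp_mk' N φ hN, MonoidHom.range_comp, QuotientGroup.range_mk',
      ← MonoidHom.range_eq_map]
  have hkerψ : ψ.ker = ((QuotientGroup.mk' N).comp ι).range := by
    rw [QuotientGroup.ker_lift, hker, Subgroup.map_sup, QuotientGroup.map_mk'_self, bot_sup_eq,
      MonoidHom.range_comp]
  rw [← ψ.ker.card_mul_index, Subgroup.index_ker, hrange, hkerψ, mul_comm,
    ← Subgroup.index_ker ((QuotientGroup.mk' N).comp ι), ← MonoidHom.comap_ker,
    QuotientGroup.ker_mk', Subgroup.index_eq_card]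

theorem card_quotient_range_powMonoidHom {M : Type*} [CommMonoid M] [Finite Mˣ] (m : ℕ) :
    Nat.card (Mˣ ⧸ (powMonoidHom m : Mˣ →* Mˣ).range) = Nat.card (rootsOfUnity m M) := by
  rw [← Subgroup.index_eq_card, Subgroup.index_range, rootsOfUnity_eq_ker]

theorem FractionalIdeal.pow_left_injective {R K : Type*} [CommRing R] [IsDedekindDomain R]
    [Field K] [Algebra R K] [IsFractionRing R K] {m : ℕ} (hm : m ≠ 0) :
    Function.Injective fun I : FractionalIdeal R⁰ K => I ^ m := by
  intro I J (h : I ^ m = J ^ m)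
  obtain rfl | hI := eq_or_ne I 0
  · exact ((pow_eq_zero_iff hm).1 (h.symm.trans (zero_pow hm))).symm
  have hJ : J ≠ 0 := by rintro rfl; exact pow_ne_zero m hI (h.trans (zero_pow hm))
  rw [← finprod_heightOneSpectrum_factorization' K hI,
    ← finprod_heightOneSpectrum_factorization' K hJ]
  refine finprod_congr fun v => congrArg _ ?_
  have := congrArg (count K v) h
  rwa [count_pow, count_pow, mul_right_inj' (by exact_mod_cast hm)] at this

theorem FractionalIdeal.powMonoidHom_units_injective {R K : Type*} [CommRing R]
    [IsDedekindDomain R] [Field K] [Algebra R K] [IsFractionRing R K] {m : ℕ} (hm : m ≠ 0) :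
    Function.Injective (powMonoidHom m : (FractionalIdeal R⁰ K)ˣ →* _) :=
  fun _ _ h => Units.ext (FractionalIdeal.pow_left_injective hm (congrArg Units.val h))

namespace IsIntegrallyClosed

variable {R K : Type*} [CommRing R] [IsIntegrallyClosed R] [Field K] [Algebra R K]
  [IsFractionRing R K] {m : ℕ}

open Polynomial in
theorem exists_algebraMap_eq_of_pow_eq (hm : m ≠ 0) {x : K} {c : R}
    (h : x ^ m = algebraMap R K c) : ∃ y : R, algebraMap R K y = x :=
  isIntegral_iff.mp ⟨X ^ m - C c, monic_X_pow_sub_C c hm, by simp [h]⟩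

theorem comap_range_powMonoidHom (hm : m ≠ 0) :
    (powMonoidHom m : Kˣ →* Kˣ).range.comap (Units.map (algebraMap R K : R →* K)) =
      (powMonoidHom m : Rˣ →* Rˣ).range := by
  ext u
  refine ⟨fun ⟨y, hy⟩ => ?_, fun ⟨v, hv⟩ => ⟨Units.map (algebraMap R K : R →* K) v, by
    rw [← hv, powMonoidHom_apply, powMonoidHom_apply, map_pow]⟩⟩
  have hy : (y : K) ^ m = algebraMap R K u := congrArg Units.val hy
  obtain ⟨z, hz⟩ := exists_algebraMap_eq_of_pow_eq hm hy
  have hzu : z ^ m = u := IsFractionRing.injective R K (by rw [map_pow, hz, hy])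
  exact ⟨((isUnit_pow_iff hm).1 (hzu ▸ u.isUnit)).unit, Units.ext hzu⟩

theorem card_rootsOfUnity (hm : m ≠ 0) :
    Nat.card (rootsOfUnity m R) = Nat.card {x : K // x ^ m = 1} := by
  have : NeZero m := ⟨hm⟩
  refine Nat.card_eq_of_bijective (fun ζ => ⟨algebraMap R K (ζ : Rˣ), by
    rw [← map_pow, ← Units.val_pow_eq_pow_val, (mem_rootsOfUnity m _).1 ζ.2, Units.val_one,
      map_one]⟩) ⟨fun ζ η h => ?_, fun ⟨x, hx⟩ => ?_⟩
  · exact Subtype.ext (Units.ext (IsFractionRing.injective R K (congrArg Subtype.val h)))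
  · obtain ⟨y, rfl⟩ := exists_algebraMap_eq_of_pow_eq hm (hx.trans (map_one (algebraMap R K)).symm)
    have hy : y ^ m = 1 := IsFractionRing.injective R K (by rw [map_pow, hx, map_one])
    exact ⟨rootsOfUnity.mkOfPowEq y hy, rfl⟩

end IsIntegrallyClosed

section PrincipalPow

variable {R K : Type*} [CommRing R] [Field K] [Algebra R K] [IsFractionRing R K] {m : ℕ}

theorem ClassGroup.mk_eq_one_iff_mem_range [IsDomain R] {I : (FractionalIdeal R⁰ K)ˣ} :
    ClassGroup.mk K I = 1 ↔ I ∈ (toPrincipalIdeal R K).range := by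
  rw [ClassGroup.mk_eq_one_iff, isPrincipal_iff, mem_principal_ideals_iff]
  exact exists_congr fun _ => eq_comm

theorem ker_toPrincipalIdeal [IsDomain R] :
    (toPrincipalIdeal R K).ker = (Units.map (algebraMap R K : R →* K)).range := by
  ext x
  rw [MonoidHom.mem_ker, toPrincipalIdeal_eq_iff, Units.val_one, ← spanSingleton_one, eq_comm,
    spanSingleton_eq_spanSingleton, MonoidHom.mem_range]
  refine exists_congr fun z => ?_
  rw [Units.ext_iff, Units.smul_def, Algebra.smul_def, mul_one]
  rfl

variable (R K) in
def principalPowSubgroup (m : ℕ) : Subgroup Kˣ :=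
  (powMonoidHom m : (FractionalIdeal R⁰ K)ˣ →* _).range.comap (toPrincipalIdeal R K)

theorem mem_principalPowSubgroup (hm : m ≠ 0) {x : Kˣ} :
    x ∈ principalPowSubgroup R K m ↔
      ∃ I : FractionalIdeal R⁰ K, spanSingleton R⁰ (x : K) = I ^ m := by
  simp_rw [← coe_toPrincipalIdeal]
  refine ⟨fun ⟨I, hI⟩ => ⟨I, by rw [← hI, powMonoidHom_apply, Units.val_pow_eq_pow_val]⟩,
    fun ⟨I, hI⟩ => ?_⟩
  have hI' : IsUnit I := (isUnit_pow_iff hm).1 (hI ▸ (toPrincipalIdeal R K x).isUnit)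
  exact ⟨hI'.unit, Units.ext hI.symm⟩

theorem range_powMonoidHom_le_principalPowSubgroup :
    (powMonoidHom m : Kˣ →* Kˣ).range ≤ principalPowSubgroup R K m := by
  rintro _ ⟨y, rfl⟩
  exact ⟨toPrincipalIdeal R K y, (map_pow _ y m).symm⟩

namespace principalPowSubgroup

variable [IsDedekindDomain R]

noncomputable def root (hm : m ≠ 0) : principalPowSubgroup R K m →* (FractionalIdeal R⁰ K)ˣ :=
  (MonoidHom.ofInjective (powMonoidHom_units_injective hm)).symm.toMonoidHom.comp
    ((toPrincipalIdeal R K).subgroupComap _)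

theorem root_eq_iff (hm : m ≠ 0) {x : principalPowSubgroup R K m}
    {I : (FractionalIdeal R⁰ K)ˣ} : root hm x = I ↔ I ^ m = toPrincipalIdeal R K x := by
  change (MonoidHom.ofInjective (powMonoidHom_units_injective hm)).symm
    ⟨toPrincipalIdeal R K x, x.2⟩ = I ↔ _
  rw [MulEquiv.symm_apply_eq, Subtype.ext_iff, MonoidHom.ofInjective_apply, eq_comm]
  rfl

theorem root_eq_toPrincipalIdeal_iff (hm : m ≠ 0) {x : principalPowSubgroup R K m} {y : Kˣ} :
    root hm x = toPrincipalIdeal R K y ↔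
      ∃ u : Rˣ, Units.map (algebraMap R K : R →* K) u * y ^ m = x := by
  rw [root_eq_iff, ← map_pow, eq_comm, ← div_eq_one, ← map_div, ← MonoidHom.mem_ker,
    ker_toPrincipalIdeal]
  exact exists_congr fun u => eq_div_iff_mul_eq'

noncomputable def rootClass (hm : m ≠ 0) : principalPowSubgroup R K m →* ClassGroup R :=
  (ClassGroup.mk K).comp (root hm)

noncomputable def ofUnits : Rˣ →* principalPowSubgroup R K m :=
  (Units.map (algebraMap R K : R →* K)).codRestrict _ fun u =>
    ⟨1, by rw [map_one, eq_comm, ← MonoidHom.mem_ker, ker_toPrincipalIdeal]; exact ⟨u, rfl⟩⟩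

theorem range_rootClass (hm : m ≠ 0) :
    (rootClass (K := K) hm).range = (powMonoidHom m : ClassGroup R →* ClassGroup R).ker := by
  ext c
  rw [MonoidHom.mem_ker, powMonoidHom_apply]
  refine ⟨?_, ClassGroup.induction K (fun I hI => ?_) c⟩
  · rintro ⟨x, rfl⟩
    rw [rootClass, MonoidHom.comp_apply, ← map_pow, ClassGroup.mk_eq_one_iff_mem_range,
      (root_eq_iff hm).1 rfl]
    exact ⟨x, rfl⟩
  · rw [← map_pow, ClassGroup.mk_eq_one_iff_mem_range] at hI
    obtain ⟨x, hx⟩ := hI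
    exact ⟨⟨x, I, hx.symm⟩, congrArg (ClassGroup.mk K) ((root_eq_iff hm).2 hx.symm)⟩

theorem ker_rootClass (hm : m ≠ 0) :
    (rootClass (K := K) hm).ker =
      (powMonoidHom m : Kˣ →* Kˣ).range.subgroupOf (principalPowSubgroup R K m) ⊔
        ofUnits.range := by
  ext x
  rw [MonoidHom.mem_ker, rootClass, MonoidHom.comp_apply, ClassGroup.mk_eq_one_iff_mem_range,
    Subgroup.mem_sup]
  constructor
  · rintro ⟨y, hy⟩
    obtain ⟨u, hu⟩ := (root_eq_toPrincipalIdeal_iff hm).1 hy.symm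
    refine ⟨⟨y ^ m, range_powMonoidHom_le_principalPowSubgroup ⟨y, rfl⟩⟩, ⟨y, rfl⟩, ofUnits u,
      ⟨u, rfl⟩, Subtype.ext ?_⟩
    rw [← hu, mul_comm]
    rfl
  · rintro ⟨a, ⟨y, hy⟩, _, ⟨u, rfl⟩, rfl⟩
    refine ⟨y, ((root_eq_toPrincipalIdeal_iff hm).2 ⟨u, ?_⟩).symm⟩
    rw [mul_comm, ← powMonoidHom_apply, hy]
    rfl

theorem comap_ofUnits (hm : m ≠ 0) :
    ((powMonoidHom m : Kˣ →* Kˣ).range.subgroupOf (principalPowSubgroup R K m)).comap ofUnits =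
      (powMonoidHom m : Rˣ →* Rˣ).range := by
  rw [Subgroup.subgroupOf, Subgroup.comap_comap]
  exact IsIntegrallyClosed.comap_range_powMonoidHom hm

theorem card_quotient (hm : m ≠ 0) :
    Nat.card (principalPowSubgroup R K m ⧸
        (powMonoidHom m : Kˣ →* Kˣ).range.subgroupOf (principalPowSubgroup R K m)) =
      Nat.card (powMonoidHom m : ClassGroup R →* ClassGroup R).ker *
        Nat.card (Rˣ ⧸ (powMonoidHom m : Rˣ →* Rˣ).range) := by
  rw [card_quotient_eq_card_range_mul_card_quotient_comap ofUnits (rootClass hm) _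
    (ker_rootClass hm), range_rootClass hm, comap_ofUnits hm]

end principalPowSubgroup

end PrincipalPow

namespace NumberField

variable {K : Type*} [Field K] [NumberField K]

theorem ratCast_norm_eq_normSq (h2 : Module.finrank ℚ K = 2) (hre : IsEmpty (K →+* ℝ))
    (φ : K →+* ℂ) (x : K) : (Algebra.norm ℚ x : ℝ) = Complex.normSq (φ x) := by
  classical
  have hne : φ ≠ ComplexEmbedding.conjugate φ := fun h =>
    hre.elim (ComplexEmbedding.isReal_iff.mpr h.symm).embedding
  have huniv : (Finset.univ : Finset (K →+* ℂ)) = {φ, ComplexEmbedding.conjugate φ} := by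
    refine (Finset.eq_univ_of_card _ ?_).symm
    rw [Finset.card_pair hne, Embeddings.card K ℂ, h2]
  apply Complex.ofReal_injective
  rw [Complex.normSq_eq_conj_mul_self, Complex.ofReal_ratCast, ← eq_ratCast (algebraMap ℚ ℂ),
    Algebra.norm_eq_prod_embeddings ℚ ℂ x,
    ← Fintype.prod_equiv (RingHom.equivRatAlgHom K ℂ) (fun ψ : K →+* ℂ => ψ x)
      (fun σ : K →ₐ[ℚ] ℂ => σ x) (fun ψ => by simp [RingHom.equivRatAlgHom_apply]),
    huniv, Finset.prod_pair hne, mul_comm]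
  rfl

theorem norm_pos (h2 : Module.finrank ℚ K = 2) (hre : IsEmpty (K →+* ℝ)) {x : K} (hx : x ≠ 0) :
    0 < Algebra.norm ℚ x := by
  obtain ⟨φ⟩ : Nonempty (K →+* ℂ) :=
    Fintype.card_pos_iff.mp (by rw [Embeddings.card K ℂ, h2]; omega)
  exact_mod_cast ratCast_norm_eq_normSq h2 hre φ x ▸ Complex.normSq_pos.mpr ((map_ne_zero φ).mpr hx)

theorem finite_units (h2 : Module.finrank ℚ K = 2) (hre : IsEmpty (K →+* ℝ)) :
    Finite (𝓞 K)ˣ := by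
  have hmem (u : (𝓞 K)ˣ) : u ∈ Units.torsion K := by
    refine (Units.mem_torsion K).2 fun w => ?_
    have h := ratCast_norm_eq_normSq h2 hre w.embedding (u : K)
    rw [← abs_of_pos (norm_pos h2 hre (Units.coe_ne_zero u)), Units.norm, Rat.cast_one,
      Complex.normSq_eq_norm_sq, InfinitePlace.norm_embedding_eq] at h
    exact (pow_eq_one_iff_of_nonneg (apply_nonneg w _) two_ne_zero).1 h.symm
  exact Finite.of_injective (fun u => (⟨u, hmem u⟩ : Units.torsion K)) fun a b h => by
    simpa using h

theorem exists_norm_eq_pow_of_spanSingleton_eq_pow (h2 : Module.finrank ℚ K = 2)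
    (hre : IsEmpty (K →+* ℝ)) {m : ℕ} (hm : m ≠ 0) {x : K} (hx : x ≠ 0)
    {I : FractionalIdeal (𝓞 K)⁰ K} (hI : spanSingleton (𝓞 K)⁰ x = I ^ m) :
    ∃ q : ℚˣ, Algebra.norm ℚ x = (q : ℚ) ^ m := by
  have h := congrArg absNorm hI
  rw [absNorm_span_singleton, map_pow, abs_of_pos (norm_pos h2 hre hx)] at h
  exact ⟨Units.mk0 _ ((pow_ne_zero_iff hm).1 (h ▸ (norm_pos h2 hre hx).ne')), h⟩

end NumberField

theorem stmt4_general (K : Type*) [Field K] [NumberField K]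
    (h2 : Module.finrank ℚ K = 2) (hre : IsEmpty (K →+* ℝ))
    (n : ℕ)
    (L : Subgroup Kˣ)
    (hL : ∀ x : Kˣ, x ∈ L ↔
      ((∃ q : ℚˣ, Algebra.norm ℚ (x : K) = (q : ℚ) ^ (n + 1)) ∧
        ∃ I : FractionalIdeal (𝓞 K)⁰ K,
          FractionalIdeal.spanSingleton (𝓞 K)⁰ (x : K) = I ^ (n + 1))) :
    (powMonoidHom (n + 1) : Kˣ →* Kˣ).range ≤ L ∧
    Nat.card (L ⧸ ((powMonoidHom (n + 1) : Kˣ →* Kˣ).range.subgroupOf L)) =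
      Nat.card ((powMonoidHom (n + 1) :
          ClassGroup (𝓞 K) →* ClassGroup (𝓞 K)).ker) *
        Nat.card {x : K // x ^ (n + 1) = 1} := by
  have hm : n + 1 ≠ 0 := n.succ_ne_zero
  obtain rfl : L = principalPowSubgroup (𝓞 K) K (n + 1) := by
    ext x
    rw [hL, mem_principalPowSubgroup hm]
    exact and_iff_right_of_imp fun ⟨I, hI⟩ =>
      exists_norm_eq_pow_of_spanSingleton_eq_pow h2 hre hm x.ne_zero hI
  have := finite_units h2 hre
  refine ⟨range_powMonoidHom_le_principalPowSubgroup, ?_⟩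
  rw [principalPowSubgroup.card_quotient hm, card_quotient_range_powMonoidHom,
    IsIntegrallyClosed.card_rootsOfUnity (K := K) hm]

/-- For `K` imaginary quadratic, the subgroup `𝐋_{n+1}` of `Kˣ` (elements whose norm is an
`(n+1)`-st power in `ℚˣ` and whose principal fractional ideal is an `(n+1)`-st power)
contains `(Kˣ)^{n+1}` and the quotient `𝐋_{n+1}/(Kˣ)^{n+1}` has cardinality
`h_{K,n+1} ⬝ |μ_{n+1}(K)|`. -/
theorem stmt4 (K : Type*) [Field K] [NumberField K]
    (h2 : Module.finrank ℚ K = 2) (hre : IsEmpty (K →+* ℝ))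
    (n : ℕ) (hn : 1 ≤ n)
    (L : Subgroup Kˣ)
    (hL : ∀ x : Kˣ, x ∈ L ↔
      ((∃ q : ℚˣ, Algebra.norm ℚ (x : K) = (q : ℚ) ^ (n + 1)) ∧
        ∃ I : FractionalIdeal (𝓞 K)⁰ K,
          FractionalIdeal.spanSingleton (𝓞 K)⁰ (x : K) = I ^ (n + 1))) :
    (powMonoidHom (n + 1) : Kˣ →* Kˣ).range ≤ L ∧
    Nat.card (L ⧸ ((powMonoidHom (n + 1) : Kˣ →* Kˣ).range.subgroupOf L)) =
      Nat.card ((powMonoidHom (n + 1) :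
          ClassGroup (𝓞 K) →* ClassGroup (𝓞 K)).ker) *
        Nat.card {x : K // x ^ (n + 1) = 1} :=
  stmt4_general K h2 hre n L hL
end

section
/- Let χ₃ denote the unique nontrivial Dirichlet character modulo 3. Then (-1)^5 · (2·10/2^9) · ζ(-9) · ∏_{j=1}^{4} ζ(1-2j)·L(χ₃, -2j) = 809/5746705367040. -/
/-!
`L(Φ, s)` for `Φ : ZMod N → ℂ` is `N^(-s) ∑ⱼ Φ j ζ(j/N, s)`, and the Hurwitz zeta values at negative
integers are Bernoulli polynomial values: `ζ(x, -k) = -B_{k+1}(x)/(k+1)`. For the nontrivial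
character mod 3 this gives `L(χ₃, -2j) = -3^{2j} (B_{2j+1}(1/3) - B_{2j+1}(2/3)) / (2j+1)`, and the
reflection `B_n(1 - x) = -B_n(x)` (`n` odd) leaves only `B_{2j+1}(1/3)`. Together with
`ζ(1 - 2j) = -B_{2j}/(2j)` the whole expression is rational; the numerator `809` comes from
`B₉(1/3) = -809/3⁹`.
-/

open Finset

theorem bernoulli'_six : bernoulli' 6 = 1 / 42 := by
  rw [bernoulli'_def]
  norm_num [sum_range_succ, bernoulli'_eq_zero_of_odd, Nat.choose]

theorem bernoulli'_eight : bernoulli' 8 = -1 / 30 := by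
  rw [bernoulli'_def]
  norm_num [sum_range_succ, bernoulli'_eq_zero_of_odd, bernoulli'_six, Nat.choose]

theorem bernoulli'_ten : bernoulli' 10 = 5 / 66 := by
  rw [bernoulli'_def]
  norm_num [sum_range_succ, bernoulli'_eq_zero_of_odd, bernoulli'_six, bernoulli'_eight, Nat.choose]

namespace Polynomial

theorem bernoulli_three_eval_one_div_three : (bernoulli 3).eval (1 / 3) = 1 / 27 := by
  norm_num [bernoulli, sum_range_succ, _root_.bernoulli, Nat.choose]

theorem bernoulli_five_eval_one_div_three : (bernoulli 5).eval (1 / 3) = -5 / 243 := by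
  norm_num [bernoulli, sum_range_succ, _root_.bernoulli, bernoulli'_eq_zero_of_odd, Nat.choose]

theorem bernoulli_seven_eval_one_div_three : (bernoulli 7).eval (1 / 3) = 49 / 2187 := by
  norm_num [bernoulli, sum_range_succ, _root_.bernoulli, bernoulli'_eq_zero_of_odd, bernoulli'_six,
    Nat.choose]

theorem bernoulli_nine_eval_one_div_three : (bernoulli 9).eval (1 / 3) = -809 / 19683 := by
  norm_num [bernoulli, sum_range_succ, _root_.bernoulli, bernoulli'_eq_zero_of_odd, bernoulli'_six,
    bernoulli'_eight, Nat.choose]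

end Polynomial

theorem riemannZeta_one_sub_two_mul_nat {j : ℕ} (hj : j ≠ 0) :
    riemannZeta (1 - 2 * j) = ((-bernoulli' (2 * j) / (2 * j) : ℚ) : ℂ) := by
  obtain ⟨i, rfl⟩ := Nat.exists_eq_add_one_of_ne_zero hj
  have harg : 1 - 2 * ((i + 1 : ℕ) : ℂ) = -((2 * i + 1 : ℕ) : ℂ) := by push_cast; ring
  rw [harg, riemannZeta_neg_nat_eq_bernoulli', show 2 * i + 1 + 1 = 2 * (i + 1) by ring]
  push_cast
  ring

theorem ZMod.LFunction_neg_nat {N : ℕ} [NeZero N] (Φ : ZMod N → ℂ) {k : ℕ} (hk : k ≠ 0) :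
    LFunction Φ (-k) = -N ^ k / (k + 1) *
      ∑ j : ZMod N, Φ j * (((Polynomial.bernoulli (k + 1)).eval (j.val / N : ℚ) : ℚ) : ℂ) := by
  have hN : (0 : ℝ) < N := Nat.cast_pos.mpr (NeZero.pos N)
  rw [LFunction, neg_neg, Complex.cpow_natCast, mul_sum, mul_sum]
  refine sum_congr rfl fun j _ ↦ ?_
  have hj : (j.val / N : ℝ) ∈ Set.Icc 0 1 :=
    ⟨by positivity, div_le_one_of_le₀ (Nat.cast_le.mpr j.val_lt.le) hN.le⟩
  have hcast : ((j.val / N : ℝ) : ℂ) = algebraMap ℚ ℂ (j.val / N) := by push_cast; rfl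
  rw [toAddCircle_apply, HurwitzZeta.hurwitzZeta_neg_nat hk hj, Polynomial.eval_map_algebraMap,
    hcast, Polynomial.aeval_algebraMap_apply, Polynomial.coe_aeval_eq_eval, eq_ratCast]
  ring

namespace DirichletCharacter

theorem apply_two_eq_neg_one_of_ne_one {R : Type*} [CommRing R] [NoZeroDivisors R]
    {χ : DirichletCharacter R 3} (hχ : χ ≠ 1) : χ 2 = -1 := by
  have hsq : χ 2 * χ 2 = 1 := by rw [← map_mul, show (2 * 2 : ZMod 3) = 1 from rfl, map_one]
  refine (mul_self_eq_one_iff.mp hsq).resolve_left fun h2 ↦ hχ <| MulChar.ext fun u ↦ ?_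
  have hu : (u : ZMod 3) = 1 ∨ (u : ZMod 3) = 2 := by fin_cases u <;> decide
  rw [MulChar.one_apply_coe]
  rcases hu with hu | hu <;> simp [hu, h2]

theorem LFunction_neg_two_mul_nat_of_ne_one {χ : DirichletCharacter ℂ 3} (hχ : χ ≠ 1) {j : ℕ}
    (hj : j ≠ 0) :
    χ.LFunction (-(2 * j)) =
      ((-2 * 3 ^ (2 * j) / (2 * j + 1) * (Polynomial.bernoulli (2 * j + 1)).eval (1 / 3) : ℚ) : ℂ) := by
  have htwo_thirds : (Polynomial.bernoulli (2 * j + 1)).eval (2 / 3) =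
      -(Polynomial.bernoulli (2 * j + 1)).eval (1 / 3) := by
    rw [show (2 / 3 : ℚ) = 1 - 1 / 3 by norm_num, Polynomial.bernoulli_eval_one_sub,
      (odd_two_mul_add_one j).neg_one_pow, neg_one_mul]
  have hsum (f : ZMod 3 → ℂ) : ∑ i, f i = f 0 + f 1 + f 2 := Fin.sum_univ_three f
  have hval₁ : (1 : ZMod 3).val = 1 := rfl
  have hval₂ : (2 : ZMod 3).val = 2 := rfl
  have hk := ZMod.LFunction_neg_nat χ (k := 2 * j) (by positivity)
  push_cast at hk
  rw [LFunction, hk, hsum, χ.map_nonunit not_isUnit_zero, map_one,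
    apply_two_eq_neg_one_of_ne_one hχ, hval₁, hval₂]
  simp only [Nat.cast_one, Nat.cast_ofNat, htwo_thirds, zero_mul, zero_add]
  push_cast
  ring

end DirichletCharacter

/-- The minimal Euler–Poincaré characteristic in dimension 9:
`(-1)^5 · (2·10/2^9) · ζ(-9) · ∏_{j=1}^{4} ζ(1-2j)·L(χ₃,-2j) = 809/5746705367040`. -/
theorem stmt12 (χ₃ : DirichletCharacter ℂ 3) (hχ₃ : χ₃ ≠ 1) :
    (-1 : ℂ) ^ 5 * (2 * 10 / 2 ^ 9) * riemannZeta (-9) *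
        ∏ j ∈ Finset.Icc (1 : ℕ) 4,
          riemannZeta (1 - 2 * (j : ℂ)) * χ₃.LFunction (-(2 * (j : ℂ))) =
      809 / 5746705367040 := by
  have hζ := riemannZeta_one_sub_two_mul_nat (j := 5) (by norm_num)
  norm_num at hζ
  have hprod : ∏ j ∈ Icc (1 : ℕ) 4, riemannZeta (1 - 2 * (j : ℂ)) * χ₃.LFunction (-(2 * (j : ℂ))) =
      ∏ j ∈ Icc (1 : ℕ) 4, ((-bernoulli' (2 * j) / (2 * j) : ℚ) : ℂ) *
        ((-2 * 3 ^ (2 * j) / (2 * j + 1) * (Polynomial.bernoulli (2 * j + 1)).eval (1 / 3) : ℚ) : ℂ) :=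
    prod_congr rfl fun j hj ↦ by
      have hj₀ : j ≠ 0 := by grind
      rw [riemannZeta_one_sub_two_mul_nat hj₀,
        DirichletCharacter.LFunction_neg_two_mul_nat_of_ne_one hχ₃ hj₀]
  rw [hζ, hprod]
  norm_num [prod_Icc_succ_top, bernoulli'_six, bernoulli'_eight, bernoulli'_ten,
    Polynomial.bernoulli_three_eval_one_div_three, Polynomial.bernoulli_five_eval_one_div_three,
    Polynomial.bernoulli_seven_eval_one_div_three, Polynomial.bernoulli_nine_eval_one_div_three]
end
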